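/- For every α ∈ (0,1) there exists a constant C > 0 such that for every t > 0 and all x, z ∈ (0,π): ∫_0^π |ΔG_t(x,y) − ΔG_t(z,y)| dy ≤ C e^{−t/2} |x − z|^α · ( Σ_{j=0}^∞ j^{2(2+α)} e^{−j⁴ t} )^{1/2}. -/

import Mathlib

open Real MeasureTheory

/-- The Neumann eigenfunctions of the Laplacian on `(0, π)`:
`φ_0 = √(1/π)` and `φ_j(x) = √(2/π) cos(j x)` for `j ≥ 1`. -/
noncomputable def phi (j : ℕ) (x : ℝ) : ℝ :=
  if j = 0 then Real.sqrt (1 / Real.pi) else Real.sqrt (2 / Real.pi) * Real.cos (j * x)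

/-- `ΔG_t(x,y) = -Σ_j λ_j e^{-λ_j² t} φ_j(x) φ_j(y)` with `λ_j = j²`. -/
noncomputable def DGker (t x y : ℝ) : ℝ :=
  -∑' j : ℕ, (j : ℝ) ^ 2 * Real.exp (-(j : ℝ) ^ 4 * t) * phi j x * phi j y

lemma phi_cont (j : ℕ) : Continuous (phi j) := by
  unfold phi
  by_cases h : j = 0 <;> simp only [h, if_true, if_false] <;> fun_prop

lemma phi_abs_le (j : ℕ) (y : ℝ) : |phi j y| ≤ Real.sqrt (2 / Real.pi) := by
  by_cases h : j = 0
  · simp only [phi, h, if_true, abs_of_nonneg (Real.sqrt_nonneg _)]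
    exact Real.sqrt_le_sqrt (by rw [div_le_div_iff_of_pos_right Real.pi_pos]; norm_num)
  · simp only [phi, h, if_false, abs_mul, abs_of_nonneg (Real.sqrt_nonneg _)]
    calc Real.sqrt (2/Real.pi) * |Real.cos (j*y)| ≤ Real.sqrt (2/Real.pi) * 1 :=
          mul_le_mul_of_nonneg_left (Real.abs_cos_le_one _) (Real.sqrt_nonneg _)
      _ = _ := mul_one _

lemma cos_lip (a b : ℝ) : |Real.cos a - Real.cos b| ≤ |a - b| := by
  rw [Real.cos_sub_cos]
  calc |(-2) * Real.sin ((a+b)/2) * Real.sin ((a-b)/2)|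
      = 2 * |Real.sin ((a+b)/2)| * |Real.sin ((a-b)/2)| := by
        rw [abs_mul, abs_mul]; norm_num
    _ ≤ 2 * 1 * |(a-b)/2| := by
        apply mul_le_mul
        · exact mul_le_mul_of_nonneg_left (Real.abs_sin_le_one _) (by norm_num)
        · exact Real.abs_sin_le_abs
        · positivity
        · norm_num
    _ = |a - b| := by rw [abs_div, abs_two]; ring

lemma integral_cos_int_mul (m : ℤ) (hm : m ≠ 0) :
    ∫ y in (0:ℝ)..Real.pi, Real.cos (m * y) = 0 := by
  have hm' : (m:ℝ) ≠ 0 := Int.cast_ne_zero.mpr hm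
  rw [intervalIntegral.integral_comp_mul_left Real.cos hm']
  simp [Real.sin_int_mul_pi]

lemma integral_cos_nat_mul (j : ℕ) (hj : j ≠ 0) :
    ∫ y in (0:ℝ)..Real.pi, Real.cos (j * y) = 0 := by
  have := integral_cos_int_mul j (by exact_mod_cast hj)
  simpa using this

lemma integral_cos_mul_cos_eq_zero (j k : ℕ) (hj : j ≠ 0) (hk : k ≠ 0) (hjk : j ≠ k) :
    ∫ y in (0:ℝ)..Real.pi, Real.cos (j * y) * Real.cos (k * y) = 0 := by
  have key : ∀ y : ℝ, Real.cos (j * y) * Real.cos (k * y)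
      = (Real.cos (((j:ℝ) - k) * y) + Real.cos (((j:ℝ) + k) * y)) / 2 := by
    intro y
    rw [sub_mul, add_mul, Real.cos_sub, Real.cos_add]
    ring
  rw [intervalIntegral.integral_congr (g := fun y => (Real.cos (((j:ℝ)-k)*y) + Real.cos (((j:ℝ)+k)*y))/2) (fun y _ => key y)]
  have h1 : ∫ y in (0:ℝ)..Real.pi, Real.cos (((j:ℝ)-k) * y) = 0 := by
    have := integral_cos_int_mul ((j:ℤ) - k) (by omega)
    simpa using this
  have h2 : ∫ y in (0:ℝ)..Real.pi, Real.cos (((j:ℝ)+k) * y) = 0 := by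
    have := integral_cos_int_mul ((j:ℤ) + k) (by omega)
    simpa using this
  rw [intervalIntegral.integral_div, intervalIntegral.integral_add, h1, h2]
  · norm_num
  · exact (Real.continuous_cos.comp (continuous_const.mul continuous_id)).intervalIntegrable _ _
  · exact (Real.continuous_cos.comp (continuous_const.mul continuous_id)).intervalIntegrable _ _

lemma integral_cos_sq_pi (j : ℕ) (hj : j ≠ 0) :
    ∫ y in (0:ℝ)..Real.pi, Real.cos (j * y) ^ 2 = Real.pi / 2 := by
  have key : ∀ y : ℝ, Real.cos (j * y) ^ 2 = 1/2 + Real.cos (((2*j : ℕ):ℝ) * y) / 2 := by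
    intro y
    rw [Real.cos_sq]
    push_cast
    ring_nf
  rw [intervalIntegral.integral_congr (fun y _ => key y)]
  have h3 : ∫ y in (0:ℝ)..Real.pi, Real.cos (((2*j:ℕ):ℝ) * y) / 2 = 0 := by
    rw [intervalIntegral.integral_div, integral_cos_nat_mul (2*j) (by omega)]
    norm_num
  rw [intervalIntegral.integral_add intervalIntegrable_const
    (((by fun_prop : Continuous fun y : ℝ => Real.cos (((2*j:ℕ):ℝ) * y)).intervalIntegrable _ _).div_const _), h3]
  simp
  ring

lemma cont_integrableOn {g : ℝ → ℝ} (hg : Continuous g) :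
    IntegrableOn g (Set.Ioo 0 Real.pi) := by
  exact (hg.continuousOn.integrableOn_Icc).mono_set Set.Ioo_subset_Icc_self

lemma volume_Ioo_pi : (volume (Set.Ioo (0:ℝ) Real.pi)).toReal = Real.pi := by
  rw [Real.volume_Ioo, sub_zero, ENNReal.toReal_ofReal Real.pi_pos.le]

lemma setIntegral_const_pi (c : ℝ) : ∫ _ in Set.Ioo (0:ℝ) Real.pi, c = Real.pi * c := by
  rw [setIntegral_const, measureReal_def, volume_Ioo_pi, smul_eq_mul]

lemma integral_norm_le_pi {g : ℝ → ℝ} (hg : Continuous g) {C : ℝ}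
    (hC : ∀ y, |g y| ≤ C) : ∫ y in Set.Ioo (0:ℝ) Real.pi, |g y| ≤ Real.pi * C := by
  rw [← setIntegral_const_pi C]
  exact setIntegral_mono (cont_integrableOn hg.abs)
    (integrableOn_const (by rw [Real.volume_Ioo]; exact ENNReal.ofReal_ne_top))
    hC

lemma phi_orth (j k : ℕ) :
    ∫ y in Set.Ioo (0:ℝ) Real.pi, phi j y * phi k y = if j = k then 1 else 0 := by
  rw [← integral_Ioc_eq_integral_Ioo, ← intervalIntegral.integral_of_le Real.pi_pos.le]
  by_cases hj : j = 0 <;> by_cases hk : k = 0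
  · subst hj; subst hk
    simp only [phi, if_true]
    rw [intervalIntegral.integral_const, smul_eq_mul, sub_zero,
      Real.mul_self_sqrt (by positivity : (0:ℝ) ≤ 1/Real.pi)]
    field_simp
  · have key : ∀ y : ℝ, phi j y * phi k y
        = (Real.sqrt (1/Real.pi) * Real.sqrt (2/Real.pi)) * Real.cos (k * y) := by
      intro y; simp only [phi, hj, hk, if_true, if_false]; ring
    rw [intervalIntegral.integral_congr (fun y _ => key y),
      intervalIntegral.integral_const_mul, integral_cos_nat_mul k hk]
    rw [mul_zero, if_neg (by omega)]
  · have key : ∀ y : ℝ, phi j y * phi k y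
        = (Real.sqrt (1/Real.pi) * Real.sqrt (2/Real.pi)) * Real.cos (j * y) := by
      intro y; simp only [phi, hj, hk, if_true, if_false]; ring
    rw [intervalIntegral.integral_congr (fun y _ => key y),
      intervalIntegral.integral_const_mul, integral_cos_nat_mul j hj]
    rw [mul_zero, if_neg (by omega)]
  · have key : ∀ y : ℝ, phi j y * phi k y
        = (2/Real.pi) * (Real.cos (j * y) * Real.cos (k * y)) := by
      intro y; simp only [phi, hj, hk, if_false]
      rw [show Real.sqrt (2/Real.pi) * Real.cos (j*y) * (Real.sqrt (2/Real.pi) * Real.cos (k*y))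
          = (Real.sqrt (2/Real.pi) * Real.sqrt (2/Real.pi)) * (Real.cos (j*y) * Real.cos (k*y)) by ring,
        Real.mul_self_sqrt (by positivity)]
    rw [intervalIntegral.integral_congr (fun y _ => key y),
      intervalIntegral.integral_const_mul]
    by_cases hjk : j = k
    · subst hjk
      simp only [if_true]
      rw [show (∫ y in (0:ℝ)..Real.pi, Real.cos (j*y) * Real.cos (j*y))
          = ∫ y in (0:ℝ)..Real.pi, Real.cos (j*y)^2 by
            apply intervalIntegral.integral_congr; intro y _; ring,
        integral_cos_sq_pi j hj]
      field_simp
    · rw [integral_cos_mul_cos_eq_zero j k hj hk hjk]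
      simp [hjk]

lemma summable_aux {t : ℝ} (ht : 0 < t) (k : ℕ) :
    Summable (fun j : ℕ => (j:ℝ)^k * Real.exp (-(j:ℝ)^4 * t)) := by
  have hr : ‖Real.exp (-t)‖ < 1 := by
    rw [Real.norm_eq_abs, abs_of_pos (Real.exp_pos _)]
    exact Real.exp_lt_one_iff.mpr (by linarith)
  refine Summable.of_nonneg_of_le (fun j => by positivity) (fun j => ?_)
    (summable_pow_mul_geometric_of_norm_lt_one k hr)
  have h1 : Real.exp (-(j:ℝ)^4 * t) ≤ Real.exp (-t) ^ j := by
    rw [← Real.exp_nat_mul]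
    apply Real.exp_le_exp.mpr
    have : (j:ℝ) ≤ (j:ℝ)^4 := by
      exact_mod_cast Nat.le_self_pow (by norm_num) j
    nlinarith
  calc (j:ℝ)^k * Real.exp (-(j:ℝ)^4 * t) ≤ (j:ℝ)^k * Real.exp (-t) ^ j :=
        mul_le_mul_of_nonneg_left h1 (by positivity)
    _ = _ := rfl

lemma summable_rpow_aux {t α : ℝ} (ht : 0 < t) (hα0 : 0 < α) (hα1 : α ≤ 1) :
    Summable (fun j : ℕ => (j:ℝ)^(2*(2+α)) * Real.exp (-(j:ℝ)^4 * t)) := by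
  refine Summable.of_nonneg_of_le (fun j => by positivity) (fun j => ?_) (summable_aux ht 6)
  rcases Nat.eq_zero_or_pos j with hj | hj
  · subst hj
    rw [Nat.cast_zero, Real.zero_rpow (by positivity : (2*(2+α)) ≠ 0), zero_mul]
    positivity
  · have hj1 : (1:ℝ) ≤ (j:ℝ) := by exact_mod_cast hj
    have : (j:ℝ)^(2*(2+α)) ≤ (j:ℝ)^((6:ℕ):ℝ) :=
      Real.rpow_le_rpow_of_exponent_le hj1 (by push_cast; nlinarith)
    rw [Real.rpow_natCast] at this
    exact mul_le_mul_of_nonneg_right this (Real.exp_nonneg _)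

lemma f_cont {a : ℕ → ℝ} (ha : Summable (fun j => |a j|)) :
    Continuous (fun y => ∑' j, a j * phi j y) := by
  refine continuous_tsum (fun j => continuous_const.mul (phi_cont j))
    (ha.mul_right (Real.sqrt (2/Real.pi))) (fun j y => ?_)
  rw [Real.norm_eq_abs, abs_mul]
  exact mul_le_mul_of_nonneg_left (phi_abs_le j y) (abs_nonneg _)

lemma f_bound {a : ℕ → ℝ} (ha : Summable (fun j => |a j|)) (y : ℝ) :
    |∑' j, a j * phi j y| ≤ (∑' j, |a j|) * Real.sqrt (2/Real.pi) := by
  have hs : Summable (fun j => |a j * phi j y|) := by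
    refine Summable.of_nonneg_of_le (fun j => abs_nonneg _) (fun j => ?_)
      (ha.mul_right (Real.sqrt (2/Real.pi)))
    rw [abs_mul]
    exact mul_le_mul_of_nonneg_left (phi_abs_le j y) (abs_nonneg _)
  have hs' : Summable (fun j => ‖a j * phi j y‖) := hs
  calc |∑' j, a j * phi j y| ≤ ∑' j, |a j * phi j y| :=
        norm_tsum_le_tsum_norm hs'
    _ ≤ ∑' j, |a j| * Real.sqrt (2/Real.pi) := by
        refine Summable.tsum_le_tsum (fun j => ?_) hs (ha.mul_right _)
        rw [abs_mul]
        exact mul_le_mul_of_nonneg_left (phi_abs_le j y) (abs_nonneg _)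
    _ = _ := tsum_mul_right

lemma parseval {a : ℕ → ℝ} (ha : Summable (fun j => |a j|)) :
    ∫ y in Set.Ioo (0:ℝ) Real.pi, (∑' j, a j * phi j y)^2 = ∑' j, (a j)^2 := by
  set s : ℝ := Real.sqrt (2/Real.pi) with hsdef
  set M : ℝ := (∑' j, |a j|) * s with hM
  have hs0 : 0 ≤ s := Real.sqrt_nonneg _
  have hM0 : 0 ≤ M := mul_nonneg (tsum_nonneg fun j => abs_nonneg _) hs0
  set f : ℝ → ℝ := fun y => ∑' j, a j * phi j y with hf
  have hfc : Continuous f := f_cont ha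
  have hfb : ∀ y, |f y| ≤ M := fun y => f_bound ha y
  have hinner : ∀ j, ∫ y in Set.Ioo (0:ℝ) Real.pi, phi j y * f y = a j := by
    intro j
    have h1 : ∀ y, phi j y * f y = ∑' k, a k * (phi j y * phi k y) := by
      intro y
      rw [hf, ← tsum_mul_left]
      exact tsum_congr fun k => by ring
    have hFi : ∀ k, Integrable (fun y => a k * (phi j y * phi k y))
        (volume.restrict (Set.Ioo 0 Real.pi)) := fun k =>
      cont_integrableOn (continuous_const.mul ((phi_cont j).mul (phi_cont k)))
    have hFs : Summable (fun k =>
        ∫ y in Set.Ioo (0:ℝ) Real.pi, ‖a k * (phi j y * phi k y)‖) := by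
      refine Summable.of_nonneg_of_le (fun k => integral_nonneg fun y => norm_nonneg _)
        (fun k => ?_) ((ha.mul_right (s*s)).mul_left Real.pi)
      have hb : ∀ y, |a k * (phi j y * phi k y)| ≤ |a k| * (s*s) := by
        intro y
        rw [abs_mul, abs_mul]
        exact mul_le_mul_of_nonneg_left
          (mul_le_mul (phi_abs_le j y) (phi_abs_le k y) (abs_nonneg _) hs0) (abs_nonneg _)
      simp only [Real.norm_eq_abs]
      exact integral_norm_le_pi
        (continuous_const.mul ((phi_cont j).mul (phi_cont k))) hb
    calc ∫ y in Set.Ioo (0:ℝ) Real.pi, phi j y * f y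
        = ∫ y in Set.Ioo (0:ℝ) Real.pi, ∑' k, a k * (phi j y * phi k y) := by
          simp_rw [h1]
      _ = ∑' k, ∫ y in Set.Ioo (0:ℝ) Real.pi, a k * (phi j y * phi k y) :=
          (integral_tsum_of_summable_integral_norm hFi hFs).symm
      _ = ∑' k, a k * ∫ y in Set.Ioo (0:ℝ) Real.pi, phi j y * phi k y := by
          exact tsum_congr fun k => integral_const_mul _ _
      _ = ∑' k, a k * (if j = k then 1 else 0) := by
          exact tsum_congr fun k => by rw [phi_orth]
      _ = a j := by
          rw [tsum_eq_single j (fun k hk => by rw [if_neg (fun h => hk h.symm), mul_zero])]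
          rw [if_pos rfl, mul_one]
  have h2 : ∀ y, f y ^ 2 = ∑' j, (a j * phi j y) * f y := by
    intro y
    rw [tsum_mul_right, sq]
  have hGi : ∀ j, Integrable (fun y => (a j * phi j y) * f y)
      (volume.restrict (Set.Ioo 0 Real.pi)) := fun j =>
    cont_integrableOn ((continuous_const.mul (phi_cont j)).mul hfc)
  have hGs : Summable (fun j =>
      ∫ y in Set.Ioo (0:ℝ) Real.pi, ‖(a j * phi j y) * f y‖) := by
    refine Summable.of_nonneg_of_le (fun j => integral_nonneg fun y => norm_nonneg _)
      (fun j => ?_) ((ha.mul_right (s*M)).mul_left Real.pi)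
    have hb : ∀ y, |(a j * phi j y) * f y| ≤ |a j| * (s*M) := by
      intro y
      rw [abs_mul, abs_mul, mul_assoc]
      exact mul_le_mul_of_nonneg_left
        (mul_le_mul (phi_abs_le j y) (hfb y) (abs_nonneg _) hs0) (abs_nonneg _)
    simp only [Real.norm_eq_abs]
    exact integral_norm_le_pi
      ((continuous_const.mul (phi_cont j)).mul hfc) hb
  calc ∫ y in Set.Ioo (0:ℝ) Real.pi, f y ^ 2
      = ∫ y in Set.Ioo (0:ℝ) Real.pi, ∑' j, (a j * phi j y) * f y := by simp_rw [h2]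
    _ = ∑' j, ∫ y in Set.Ioo (0:ℝ) Real.pi, (a j * phi j y) * f y :=
        (integral_tsum_of_summable_integral_norm hGi hGs).symm
    _ = ∑' j, a j * ∫ y in Set.Ioo (0:ℝ) Real.pi, phi j y * f y := by
        refine tsum_congr fun j => ?_
        simp_rw [mul_assoc]
        exact integral_const_mul _ _
    _ = ∑' j, (a j)^2 := by
        refine tsum_congr fun j => ?_
        rw [hinner j, sq]

lemma l1_le_sqrt_l2 {g : ℝ → ℝ} (hg : Continuous g) :
    ∫ y in Set.Ioo (0:ℝ) Real.pi, |g y|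
      ≤ Real.sqrt Real.pi * Real.sqrt (∫ y in Set.Ioo (0:ℝ) Real.pi, (g y)^2) := by
  set I : ℝ := ∫ y in Set.Ioo (0:ℝ) Real.pi, |g y| with hI
  set S : ℝ := ∫ y in Set.Ioo (0:ℝ) Real.pi, (g y)^2 with hS
  have hI0 : 0 ≤ I := integral_nonneg fun y => abs_nonneg _
  have hS0 : 0 ≤ S := integral_nonneg fun y => sq_nonneg _
  have key : ∀ ε : ℝ, 0 < ε → I ≤ ε * S + Real.pi * (1/(4*ε)) := by
    intro ε hε
    have pw : ∀ y, |g y| ≤ ε * (g y)^2 + 1/(4*ε) := by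
      intro y
      have h1 : (|g y| - ε * (g y)^2) * (4*ε) ≤ 1 := by
        have hga : (g y)^2 = |g y|^2 := (sq_abs _).symm
        rw [hga]
        nlinarith [sq_nonneg (2*ε*|g y| - 1)]
      have h2 : |g y| - ε * (g y)^2 ≤ 1/(4*ε) :=
        (le_div_iff₀ (by positivity)).2 h1
      linarith
    have hint1 : IntegrableOn (fun y => |g y|) (Set.Ioo 0 Real.pi) := cont_integrableOn hg.abs
    have hint2 : IntegrableOn (fun y => ε * (g y)^2 + 1/(4*ε)) (Set.Ioo 0 Real.pi) :=
      cont_integrableOn (by fun_prop)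
    calc I ≤ ∫ y in Set.Ioo (0:ℝ) Real.pi, (ε * (g y)^2 + 1/(4*ε)) :=
          integral_mono hint1 hint2 pw
      _ = ε * S + Real.pi * (1/(4*ε)) := by
          rw [integral_add ((cont_integrableOn (by fun_prop : Continuous fun y => (g y)^2)).const_mul ε)
            (integrableOn_const (by rw [Real.volume_Ioo]; exact ENNReal.ofReal_ne_top)),
            integral_const_mul, setIntegral_const_pi]
  rcases eq_or_lt_of_le hS0 with hS' | hS'
  · have hI' : I ≤ 0 := by
      by_contra h
      push_neg at h
      have h1 := key (Real.pi/(2*I)) (by positivity)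
      rw [← hS', mul_zero, zero_add] at h1
      have h2 : Real.pi * (1/(4*(Real.pi/(2*I)))) = I/2 := by
        field_simp
        ring
      rw [h2] at h1
      linarith
    have : Real.sqrt S = 0 := by rw [← hS', Real.sqrt_zero]
    rw [this, mul_zero]
    linarith
  · set ε : ℝ := Real.sqrt Real.pi / (2 * Real.sqrt S) with hε
    have hsS : 0 < Real.sqrt S := Real.sqrt_pos.2 hS'
    have hsπ : 0 < Real.sqrt Real.pi := Real.sqrt_pos.2 Real.pi_pos
    have hε0 : 0 < ε := by positivity
    have h1 := key ε hε0
    have h2 : ε * S + Real.pi * (1/(4*ε)) = Real.sqrt Real.pi * Real.sqrt S := by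
      have hπ : Real.sqrt Real.pi * Real.sqrt Real.pi = Real.pi :=
        Real.mul_self_sqrt Real.pi_pos.le
      have hSS : Real.sqrt S * Real.sqrt S = S := Real.mul_self_sqrt hS0
      rw [hε]
      field_simp
      nlinarith [hπ, hSS]
    linarith [h1, h2.le]

lemma min_le_two_rpow {u α : ℝ} (hu : 0 ≤ u) (hα0 : 0 < α) (hα1 : α ≤ 1) :
    min 2 u ≤ 2 * u ^ α := by
  rcases eq_or_lt_of_le hu with h0 | h0
  · simp [← h0, Real.zero_rpow hα0.ne']
  rcases le_or_gt u 1 with h1 | h1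
  · calc min 2 u ≤ u := min_le_right _ _
      _ = u^(1:ℝ) := (Real.rpow_one u).symm
      _ ≤ u^α := Real.rpow_le_rpow_of_exponent_ge h0 h1 hα1
      _ ≤ 2*u^α := by nlinarith [Real.rpow_nonneg hu α]
  · calc min 2 u ≤ 2 := min_le_left _ _
      _ ≤ 2*u^α := by nlinarith [Real.one_le_rpow h1.le hα0.le]


/-- Spatial Hölder estimate for the Laplacian of the Green's function
(Lemma 3.1, second inequality). -/
theorem stmt3 (α : ℝ) (hα : α ∈ Set.Ioo (0 : ℝ) 1) :
    ∃ C : ℝ, 0 < C ∧ ∀ t : ℝ, 0 < t → ∀ x z : ℝ,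
      x ∈ Set.Ioo 0 Real.pi → z ∈ Set.Ioo 0 Real.pi →
      ∫ y in Set.Ioo (0 : ℝ) Real.pi, |DGker t x y - DGker t z y|
        ≤ C * Real.exp (-t / 2) * |x - z| ^ α
          * Real.sqrt (∑' j : ℕ, (j : ℝ) ^ (2 * (2 + α)) * Real.exp (-(j : ℝ) ^ 4 * t)) := by
  obtain ⟨hα0, hα1⟩ := hα
  refine ⟨Real.sqrt 8, Real.sqrt_pos.mpr (by norm_num), ?_⟩
  intro t ht x z hx hz
  set s : ℝ := Real.sqrt (2/Real.pi) with hs_def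
  have hs0 : 0 ≤ s := Real.sqrt_nonneg _
  have hs2 : s^2 = 2/Real.pi := Real.sq_sqrt (by positivity)
  set E : ℕ → ℝ := fun j => Real.exp (-(j:ℝ)^4 * t) with hE_def
  have hE0 : ∀ j, 0 < E j := fun j => Real.exp_pos _
  set a : ℕ → ℝ := fun j => (j:ℝ)^2 * E j * (phi j x - phi j z) with ha_def
  set S : ℝ := ∑' j : ℕ, (j : ℝ) ^ (2 * (2 + α)) * E j with hS_def
  have hSsum : Summable (fun j : ℕ => (j:ℝ)^(2*(2+α)) * E j) := summable_rpow_aux ht hα0 hα1.le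
  -- summability of |a|
  have haabs : Summable (fun j => |a j|) := by
    refine Summable.of_nonneg_of_le (fun j => abs_nonneg _) (fun j => ?_)
      ((summable_aux ht 2).mul_left (2*s))
    have h1 : |a j| = (j:ℝ)^2 * E j * |phi j x - phi j z| := by
      rw [ha_def, abs_mul, abs_of_nonneg (by positivity : (0:ℝ) ≤ (j:ℝ)^2 * E j)]
    rw [h1]
    have h2 : |phi j x - phi j z| ≤ 2*s :=
      calc |phi j x - phi j z| ≤ |phi j x| + |phi j z| := abs_sub _ _
        _ ≤ s + s := add_le_add (phi_abs_le j x) (phi_abs_le j z)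
        _ = 2*s := by ring
    calc (j:ℝ)^2 * E j * |phi j x - phi j z| ≤ (j:ℝ)^2 * E j * (2*s) :=
          mul_le_mul_of_nonneg_left h2 (by positivity)
      _ = 2*s * ((j:ℝ)^2 * E j) := by ring
  -- pointwise identity
  have pointeq : ∀ y, DGker t x y - DGker t z y = -∑' j, a j * phi j y := by
    intro y
    have hgen : ∀ w : ℝ, Summable (fun j : ℕ => (j:ℝ)^2 * Real.exp (-(j:ℝ)^4 * t) * phi j w * phi j y) := by
      intro w
      apply Summable.of_norm
      refine Summable.of_nonneg_of_le (fun j => norm_nonneg _) (fun j => ?_)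
        ((summable_aux ht 2).mul_right (s*s))
      rw [Real.norm_eq_abs, abs_mul, abs_mul,
        abs_of_nonneg (by positivity : (0:ℝ) ≤ (j:ℝ)^2 * Real.exp (-(j:ℝ)^4 * t)), mul_assoc]
      exact mul_le_mul_of_nonneg_left
        (mul_le_mul (phi_abs_le j w) (phi_abs_le j y) (abs_nonneg _) hs0) (by positivity)
    simp only [DGker]
    rw [neg_sub_neg, ← Summable.tsum_sub (hgen z) (hgen x), ← tsum_neg]
    refine tsum_congr fun j => ?_
    rw [ha_def]
    ring
  -- termwise square bound
  set K : ℝ := 8/Real.pi * (|x-z|^α)^2 * Real.exp (-t) with hK_def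
  have htb : ∀ j, (a j)^2 ≤ K * ((j:ℝ)^(2*(2+α)) * E j) := by
    intro j
    rcases Nat.eq_zero_or_pos j with hj | hj
    · subst hj
      have : a 0 = 0 := by rw [ha_def]; norm_num
      rw [this]
      have : (0:ℝ) ≤ K * (((0:ℕ):ℝ)^(2*(2+α)) * E 0) := by
        apply mul_nonneg (by positivity)
        apply mul_nonneg (Real.rpow_nonneg (by norm_num) _) (hE0 0).le
      simpa using this
    · have hj1 : (1:ℝ) ≤ (j:ℝ) := by exact_mod_cast hj
      have hj0 : (0:ℝ) < (j:ℝ) := by linarith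
      -- Hölder bound on phi difference
      have hd : |phi j x - phi j z| ≤ s * (2 * ((j:ℝ)^α * |x-z|^α)) := by
        have hjne : j ≠ 0 := Nat.pos_iff_ne_zero.mp hj
        have hphi : phi j x - phi j z = s * (Real.cos (j*x) - Real.cos (j*z)) := by
          simp only [phi, hjne, if_false, hs_def]
          ring
        have hcc : |Real.cos ((j:ℝ)*x) - Real.cos ((j:ℝ)*z)| ≤ min 2 ((j:ℝ)*|x-z|) := by
          refine le_min ?_ ?_
          · calc |Real.cos ((j:ℝ)*x) - Real.cos ((j:ℝ)*z)|
                ≤ |Real.cos ((j:ℝ)*x)| + |Real.cos ((j:ℝ)*z)| := abs_sub _ _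
              _ ≤ 1 + 1 := add_le_add (Real.abs_cos_le_one _) (Real.abs_cos_le_one _)
              _ = 2 := by norm_num
          · calc |Real.cos ((j:ℝ)*x) - Real.cos ((j:ℝ)*z)| ≤ |(j:ℝ)*x - (j:ℝ)*z| := cos_lip _ _
              _ = (j:ℝ) * |x-z| := by rw [← mul_sub, abs_mul, abs_of_pos hj0]
        have hmin : min 2 ((j:ℝ)*|x-z|) ≤ 2 * ((j:ℝ)*|x-z|)^α :=
          min_le_two_rpow (by positivity) hα0 hα1.le
        have hsplit : ((j:ℝ)*|x-z|)^α = (j:ℝ)^α * |x-z|^α :=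
          Real.mul_rpow hj0.le (abs_nonneg _)
        rw [hphi, abs_mul, abs_of_nonneg hs0]
        refine mul_le_mul_of_nonneg_left ?_ hs0
        rw [← hsplit]
        exact le_trans hcc hmin
      have habs : |a j| ≤ ((j:ℝ)^2 * E j) * (s * (2 * ((j:ℝ)^α * |x-z|^α))) := by
        rw [ha_def, abs_mul, abs_of_nonneg (by positivity : (0:ℝ) ≤ (j:ℝ)^2 * E j)]
        exact mul_le_mul_of_nonneg_left hd (by positivity)
      have epow : (((j:ℝ)^2)^2) * (((j:ℝ)^α)^2) = (j:ℝ)^(2*(2+α)) := by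
        have e1 : (((j:ℝ)^2)^2 : ℝ) = (j:ℝ)^((4:ℕ):ℝ) := by
          rw [Real.rpow_natCast]
          ring
        have e2 : (((j:ℝ)^α)^2 : ℝ) = (j:ℝ)^(α*2) := by
          rw [← Real.rpow_natCast ((j:ℝ)^α) 2, ← Real.rpow_mul hj0.le]
          norm_num
        rw [e1, e2, ← Real.rpow_add hj0]
        congr 1
        push_cast
        ring
      have hE2 : E j * E j ≤ Real.exp (-t) * E j := by
        apply mul_le_mul_of_nonneg_right _ (hE0 j).le
        apply Real.exp_le_exp.mpr
        have : (1:ℝ) ≤ (j:ℝ)^4 := one_le_pow₀ hj1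
        nlinarith
      calc (a j)^2 ≤ (((j:ℝ)^2 * E j) * (s * (2 * ((j:ℝ)^α * |x-z|^α))))^2 := by
            rw [← sq_abs (a j)]
            exact pow_le_pow_left₀ (abs_nonneg _) habs 2
        _ = (s^2 * 4) * ((((j:ℝ)^2)^2) * (((j:ℝ)^α)^2)) * ((|x-z|^α)^2) * (E j * E j) := by
            ring
        _ = (s^2 * 4) * ((j:ℝ)^(2*(2+α))) * ((|x-z|^α)^2) * (E j * E j) := by rw [epow]
        _ ≤ (s^2 * 4) * ((j:ℝ)^(2*(2+α))) * ((|x-z|^α)^2) * (Real.exp (-t) * E j) := by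
            apply mul_le_mul_of_nonneg_left hE2
            apply mul_nonneg (mul_nonneg (by positivity) (Real.rpow_nonneg hj0.le _)) (by positivity)
        _ = K * ((j:ℝ)^(2*(2+α)) * E j) := by
            rw [hK_def, hs2]
            ring
  have hsq : Summable (fun j => (a j)^2) :=
    Summable.of_nonneg_of_le (fun j => sq_nonneg _) htb (hSsum.mul_left K)
  have htsum_le : ∑' j, (a j)^2 ≤ K * S := by
    calc ∑' j, (a j)^2 ≤ ∑' j : ℕ, K * ((j:ℝ)^(2*(2+α)) * E j) :=
          Summable.tsum_le_tsum htb hsq (hSsum.mul_left K)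
      _ = K * S := tsum_mul_left
  -- assemble
  have hK0 : 0 ≤ K := by
    rw [hK_def]
    positivity
  have hS0 : 0 ≤ S := tsum_nonneg fun j =>
    mul_nonneg (Real.rpow_nonneg (Nat.cast_nonneg _) _) (hE0 j).le
  have hexp : Real.sqrt (Real.exp (-t)) = Real.exp (-t/2) := by
    rw [show Real.exp (-t) = Real.exp (-t/2)^2 by rw [sq, ← Real.exp_add]; norm_num]
    exact Real.sqrt_sq (Real.exp_nonneg _)
  have hsqrt8 : Real.sqrt Real.pi * Real.sqrt (8/Real.pi) = Real.sqrt 8 := by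
    rw [← Real.sqrt_mul Real.pi_pos.le]
    congr 1
    field_simp
  calc ∫ y in Set.Ioo (0:ℝ) Real.pi, |DGker t x y - DGker t z y|
      = ∫ y in Set.Ioo (0:ℝ) Real.pi, |∑' j, a j * phi j y| := by
        simp only [pointeq, abs_neg]
    _ ≤ Real.sqrt Real.pi * Real.sqrt (∫ y in Set.Ioo (0:ℝ) Real.pi, (∑' j, a j * phi j y)^2) :=
        l1_le_sqrt_l2 (f_cont haabs)
    _ = Real.sqrt Real.pi * Real.sqrt (∑' j, (a j)^2) := by rw [parseval haabs]
    _ ≤ Real.sqrt Real.pi * Real.sqrt (K * S) :=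
        mul_le_mul_of_nonneg_left (Real.sqrt_le_sqrt htsum_le) (Real.sqrt_nonneg _)
    _ = Real.sqrt 8 * Real.exp (-t/2) * |x-z|^α * Real.sqrt S := by
        rw [hK_def, Real.sqrt_mul (by positivity) S, Real.sqrt_mul (by positivity) (Real.exp (-t)),
          Real.sqrt_mul (by positivity) ((|x-z|^α)^2), Real.sqrt_sq (Real.rpow_nonneg (abs_nonneg _) _),
          hexp]
        rw [← hsqrt8]
        ring
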